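/- arXiv:1501.02193 — 5 statements merged into one kernel-verified Lean document; each statement's English description precedes it below -/
import Mathlib

section
/- Let X and Y be independent random variables with values in (0,1), where X has the beta distribution with parameters (p₁+p₃, p₂) and Y has the beta distribution with parameters (p₃, p₁), for positive reals p₁, p₂, p₃. Then U = 1 - X·Y and V = (1 - X)/U are independent random variables. -/
/-!
The map `T (x, y) = (1 - x y, (1 - x) / (1 - x y))` is an involution of the open unit square
with Jacobian determinant `-x / (1 - x y)`. By the change of variables formula, `T` pushes the
product of the laws `Beta(p₁ + p₃, p₂)` and `Beta(p₃, p₁)` forward to the product of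
`Beta(p₁ + p₂, p₃)` and `Beta(p₂, p₁)`: in the transformed density every power of `1 - x y`
cancels, and both normalising constants equal `Γ(p₁) Γ(p₂) Γ(p₃) / Γ(p₁ + p₂ + p₃)`.
Hence the joint law of `(U, V) = T (X, Y)` is a product measure.
-/

open MeasureTheory ProbabilityTheory Set

/-- The beta distribution on `(0,1)` with parameters `(p, q)`. -/
noncomputable def betaMeasure (p q : ℝ) : Measure ℝ :=
  volume.withDensity fun x =>
    ENNReal.ofReal (if x ∈ Set.Ioo (0:ℝ) 1 then
      x ^ (p - 1) * (1 - x) ^ (q - 1) / (Real.Gamma p * Real.Gamma q / Real.Gamma (p + q))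
    else 0)

open scoped ENNReal

theorem betaMeasure_eq (p q : ℝ) :
    _root_.betaMeasure p q = ProbabilityTheory.betaMeasure p q := by
  rw [_root_.betaMeasure, ProbabilityTheory.betaMeasure]
  congr with x
  rw [betaPDF_eq, beta]
  congr 1
  simp only [mem_Ioo]
  split_ifs <;> ring

theorem ProbabilityTheory.indepFun_of_map_prod_eq_prod {Ω α β : Type*} [MeasurableSpace Ω]
    [MeasurableSpace α] [MeasurableSpace β] {μ : Measure Ω} [IsFiniteMeasure μ]
    {f : Ω → α} {g : Ω → β} (hf : Measurable f) (hg : Measurable g)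
    {ν₁ : Measure α} {ν₂ : Measure β} [IsProbabilityMeasure ν₁] [IsProbabilityMeasure ν₂]
    (h : μ.map (fun ω => (f ω, g ω)) = ν₁.prod ν₂) : IndepFun f g μ := by
  have hfst : μ.map f = ν₁ := calc
    μ.map f = (μ.map fun ω => (f ω, g ω)).map Prod.fst :=
      (Measure.map_map measurable_fst (hf.prodMk hg)).symm
    _ = ν₁ := by rw [h, Measure.map_fst_prod, measure_univ, one_smul]
  have hsnd : μ.map g = ν₂ := calc
    μ.map g = (μ.map fun ω => (f ω, g ω)).map Prod.snd :=
      (Measure.map_map measurable_snd (hf.prodMk hg)).symm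
    _ = ν₂ := by rw [h, Measure.map_snd_prod, measure_univ, one_smul]
  rw [indepFun_iff_map_prod_eq_prod_map_map hf.aemeasurable hg.aemeasurable, h, hfst, hsnd]

theorem LinearMap.det_eq_of_prod {R : Type*} [CommRing R] (f : R × R →ₗ[R] R × R) :
    LinearMap.det f = (f (1, 0)).1 * (f (0, 1)).2 - (f (0, 1)).1 * (f (1, 0)).2 := by
  rw [← LinearMap.det_toMatrix (Module.Basis.finTwoProd R), Matrix.det_fin_two]
  simp [LinearMap.toMatrix_apply]

theorem MeasureTheory.map_withDensity_eq_of_leftInvOn {E : Type*} [NormedAddCommGroup E]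
    [NormedSpace ℝ E] [FiniteDimensional ℝ E] [MeasurableSpace E] [BorelSpace E]
    (μ : Measure E) [μ.IsAddHaarMeasure] {S : Set E} (hS : MeasurableSet S)
    {T : E → E} {T' : E → E →L[ℝ] E} (hTm : Measurable T)
    (hT' : ∀ x ∈ S, HasFDerivWithinAt T (T' x) S x) (hmaps : MapsTo T S S)
    (hinv : LeftInvOn T T S) {f g : E → ℝ≥0∞} (hf : f.support ⊆ S) (hg : g.support ⊆ S)
    (hfg : ∀ x ∈ S, ENNReal.ofReal |(T' x).det| * f (T x) = g x) :
    (μ.withDensity f).map T = μ.withDensity g := by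
  have restrict_inter : ∀ h : E → ℝ≥0∞, h.support ⊆ S →
      ∀ A, ∫⁻ x in A, h x ∂μ = ∫⁻ x in A ∩ S, h x ∂μ := fun h hh A => by
    rw [inter_comm, ← Measure.restrict_restrict hS, setLIntegral_eq_of_support_subset hh]
  have himage (s : Set E) : T ⁻¹' s ∩ S = T '' (s ∩ S) := by
    rw [hinv.image_inter', (hinv.surjOn hmaps).image_eq_of_mapsTo hmaps]
  ext s hs
  rw [Measure.map_apply hTm hs, withDensity_apply _ (hTm hs), withDensity_apply _ hs,
    restrict_inter f hf, himage, lintegral_image_eq_lintegral_abs_det_fderiv_mul μ (hs.inter hS)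
      (fun x hx => (hT' x hx.2).mono inter_subset_right) (hinv.injOn.mono inter_subset_right),
    restrict_inter g hg]
  exact setLIntegral_congr_fun (hs.inter hS) fun x hx => hfg x hx.2

theorem Real.rpow_add_sub_one_eq_mul {x : ℝ} (hx : 0 < x) (a b : ℝ) :
    x ^ (a + b - 1) = x ^ (a - 1) * x ^ (b - 1) * x := by
  rw [show a + b - 1 = (a - 1) + ((b - 1) + 1) by ring, Real.rpow_add hx, Real.rpow_add hx,
    Real.rpow_one, mul_assoc]

theorem ProbabilityTheory.beta_add_mul_beta {a b c : ℝ} (ha : 0 < a) (hb : 0 < b)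
    (hc : 0 < c) :
    beta (a + c) b * beta c a = beta (a + b) c * beta b a := by
  have hac := (Real.Gamma_pos_of_pos (add_pos ha hc)).ne'
  have hab := (Real.Gamma_pos_of_pos (add_pos ha hb)).ne'
  simp only [beta, add_comm c a, add_comm b a, add_right_comm a c b]
  field_simp

noncomputable def betaInvolution (z : ℝ × ℝ) : ℝ × ℝ :=
  (1 - z.1 * z.2, (1 - z.1) / (1 - z.1 * z.2))

theorem one_sub_mul_mem_Ioo {u v : ℝ} (hu : u ∈ Ioo (0 : ℝ) 1) (hv : v ∈ Ioo (0 : ℝ) 1) :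
    1 - u * v ∈ Ioo (0 : ℝ) 1 := by
  obtain ⟨hu0, hu1⟩ := hu
  obtain ⟨hv0, hv1⟩ := hv
  constructor <;> nlinarith

theorem mapsTo_betaInvolution :
    MapsTo betaInvolution (Ioo 0 1 ×ˢ Ioo 0 1) (Ioo 0 1 ×ˢ Ioo 0 1) := by
  rintro ⟨u, v⟩ ⟨hu, hv⟩
  have hD := one_sub_mul_mem_Ioo hu hv
  refine ⟨hD, div_pos (by linarith [hu.2]) hD.1, (div_lt_one hD.1).2 ?_⟩
  nlinarith [hu.1, hv.2]

theorem leftInvOn_betaInvolution :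
    LeftInvOn betaInvolution betaInvolution (Ioo 0 1 ×ˢ Ioo 0 1) := by
  rintro ⟨u, v⟩ ⟨hu, hv⟩
  have hD := (one_sub_mul_mem_Ioo hu hv).1.ne'
  have hu0 := hu.1.ne'
  have h1 : 1 - (1 - u * v) * ((1 - u) / (1 - u * v)) = u := by field_simp; ring
  simp only [betaInvolution, h1, Prod.mk.injEq, true_and]
  field_simp
  ring

theorem measurable_betaInvolution : Measurable betaInvolution := by
  unfold betaInvolution
  fun_prop

theorem differentiableAt_betaInvolution {z : ℝ × ℝ} (h : 1 - z.1 * z.2 ≠ 0) :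
    DifferentiableAt ℝ betaInvolution z := by
  unfold betaInvolution
  fun_prop (disch := exact h)

theorem det_fderiv_betaInvolution {z : ℝ × ℝ} (h : 1 - z.1 * z.2 ≠ 0) :
    (fderiv ℝ betaInvolution z).det = -z.1 / (1 - z.1 * z.2) := by
  have hx : HasFDerivAt (Prod.fst : ℝ × ℝ → ℝ) (ContinuousLinearMap.fst ℝ ℝ ℝ) z :=
    hasFDerivAt_fst
  have hy : HasFDerivAt (Prod.snd : ℝ × ℝ → ℝ) (ContinuousLinearMap.snd ℝ ℝ ℝ) z :=
    hasFDerivAt_snd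
  have hD := (hasFDerivAt_const 1 z).sub (hx.mul hy)
  have hT := (hD.prodMk (((hasFDerivAt_const 1 z).sub hx).mul
    ((hasDerivAt_inv h).comp_hasFDerivAt z hD))).congr_of_eventuallyEq
      (f₁ := betaInvolution) (.of_forall fun w => by simp [betaInvolution, div_eq_mul_inv])
  rw [hT.fderiv, ContinuousLinearMap.det, LinearMap.det_eq_of_prod]
  simp
  ring

theorem betaPDFReal_mul_betaPDFReal_betaInvolution {a b c u v : ℝ} (ha : 0 < a) (hb : 0 < b)
    (hc : 0 < c) (hu : u ∈ Ioo (0 : ℝ) 1) (hv : v ∈ Ioo (0 : ℝ) 1) :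
    u / (1 - u * v) * (betaPDFReal (a + c) b (1 - u * v) * betaPDFReal c a ((1 - u) / (1 - u * v)))
      = betaPDFReal (a + b) c u * betaPDFReal b a v := by
  have hT := mapsTo_betaInvolution (x := (u, v)) ⟨hu, hv⟩
  simp only [betaInvolution, mem_prod, mem_Ioo] at hT hu hv
  obtain ⟨⟨hD0, hD1⟩, hw0, hw1⟩ := hT
  obtain ⟨hu0, hu1⟩ := hu
  obtain ⟨hv0, hv1⟩ := hv
  have e0 : 1 - (1 - u * v) = u * v := by ring
  have e1 : 1 - (1 - u) / (1 - u * v) = u * (1 - v) / (1 - u * v) := by field_simp; ring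
  simp only [betaPDFReal, if_pos (And.intro hD0 hD1), if_pos (And.intro hw0 hw1),
    if_pos (And.intro hu0 hu1), if_pos (And.intro hv0 hv1)]
  rw [e0, e1, Real.mul_rpow hu0.le hv0.le, Real.div_rpow (by linarith) hD0.le,
    Real.div_rpow (by nlinarith) hD0.le, Real.mul_rpow hu0.le (by linarith),
    Real.rpow_add_sub_one_eq_mul hu0, Real.rpow_add_sub_one_eq_mul hD0]
  field_simp
  rw [beta_add_mul_beta ha hb hc]

theorem support_betaPDF_subset (a b : ℝ) : (betaPDF a b).support ⊆ Ioo 0 1 := by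
  intro x hx
  by_contra h
  rw [mem_Ioo] at h
  exact hx (by rw [betaPDF_eq, if_neg h, ENNReal.ofReal_zero])

theorem map_betaInvolution_prod {a b c : ℝ} (ha : 0 < a) (hb : 0 < b) (hc : 0 < c) :
    ((ProbabilityTheory.betaMeasure (a + c) b).prod
      (ProbabilityTheory.betaMeasure c a)).map betaInvolution =
      (ProbabilityTheory.betaMeasure (a + b) c).prod (ProbabilityTheory.betaMeasure b a) := by
  have hsupp (p q r s : ℝ) : (fun z : ℝ × ℝ => betaPDF p q z.1 * betaPDF r s z.2).support ⊆
      Ioo 0 1 ×ˢ Ioo 0 1 := fun z hz =>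
    ⟨support_betaPDF_subset p q (left_ne_zero_of_mul hz),
      support_betaPDF_subset r s (right_ne_zero_of_mul hz)⟩
  have hmeas (p q : ℝ) : Measurable (betaPDF p q) := (measurable_betaPDFReal p q).ennreal_ofReal
  simp only [ProbabilityTheory.betaMeasure]
  rw [prod_withDensity (hmeas _ _) (hmeas _ _), prod_withDensity (hmeas _ _) (hmeas _ _)]
  refine map_withDensity_eq_of_leftInvOn _ (measurableSet_Ioo.prod measurableSet_Ioo)
    measurable_betaInvolution (fun z hz => (differentiableAt_betaInvolution
      (one_sub_mul_mem_Ioo hz.1 hz.2).1.ne').hasFDerivAt.hasFDerivWithinAt)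
    mapsTo_betaInvolution leftInvOn_betaInvolution (hsupp ..) (hsupp ..) ?_
  rintro ⟨u, v⟩ ⟨hu, hv⟩
  have hD := (one_sub_mul_mem_Ioo hu hv).1
  obtain ⟨hT₁, -⟩ := mapsTo_betaInvolution (x := (u, v)) ⟨hu, hv⟩
  rw [det_fderiv_betaInvolution hD.ne', abs_div, abs_neg, abs_of_pos hu.1, abs_of_pos hD]
  simp only [betaPDF, betaInvolution] at hT₁ ⊢
  rw [← ENNReal.ofReal_mul (betaPDFReal_pos hT₁.1 hT₁.2 (add_pos ha hc) hb).le,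
    ← ENNReal.ofReal_mul (div_pos hu.1 hD).le,
    ← ENNReal.ofReal_mul (betaPDFReal_pos hu.1 hu.2 (add_pos ha hb) hc).le,
    betaPDFReal_mul_betaPDFReal_betaInvolution ha hb hc hu hv]

theorem stmt_0_general {Ω : Type*} [MeasurableSpace Ω] (μ : Measure Ω) [IsProbabilityMeasure μ]
    (X Y : Ω → ℝ) (hXm : Measurable X) (hYm : Measurable Y)
    (p₁ p₂ p₃ : ℝ) (hp₁ : 0 < p₁) (hp₂ : 0 < p₂) (hp₃ : 0 < p₃)
    (hX : μ.map X = _root_.betaMeasure (p₁ + p₃) p₂) (hY : μ.map Y = _root_.betaMeasure p₃ p₁)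
    (hindep : IndepFun X Y μ) :
    IndepFun (fun ω => 1 - X ω * Y ω) (fun ω => (1 - X ω) / (1 - X ω * Y ω)) μ := by
  have := isProbabilityMeasureBeta (add_pos hp₁ hp₂) hp₃
  have := isProbabilityMeasureBeta hp₂ hp₁
  rw [betaMeasure_eq] at hX hY
  have hXY : μ.map (fun ω => (X ω, Y ω)) = (ProbabilityTheory.betaMeasure (p₁ + p₃) p₂).prod
      (ProbabilityTheory.betaMeasure p₃ p₁) := by
    rw [← hX, ← hY]
    exact hindep.map_prod_eq_prod_map_map hXm.aemeasurable hYm.aemeasurable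
  have hUV : μ.map (fun ω => (1 - X ω * Y ω, (1 - X ω) / (1 - X ω * Y ω))) =
      (ProbabilityTheory.betaMeasure (p₁ + p₂) p₃).prod
        (ProbabilityTheory.betaMeasure p₂ p₁) := by
    rw [← map_betaInvolution_prod hp₁ hp₂ hp₃, ← hXY,
      Measure.map_map measurable_betaInvolution (hXm.prodMk hYm)]
    rfl
  exact indepFun_of_map_prod_eq_prod (by fun_prop) (by fun_prop) hUV

theorem stmt_0 {Ω : Type*} [MeasurableSpace Ω] (μ : Measure Ω) [IsProbabilityMeasure μ]
    (X Y : Ω → ℝ) (hXm : Measurable X) (hYm : Measurable Y)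
    (p₁ p₂ p₃ : ℝ) (hp₁ : 0 < p₁) (hp₂ : 0 < p₂) (hp₃ : 0 < p₃)
    (hXr : ∀ ω, X ω ∈ Set.Ioo (0:ℝ) 1) (hYr : ∀ ω, Y ω ∈ Set.Ioo (0:ℝ) 1)
    (hX : μ.map X = _root_.betaMeasure (p₁ + p₃) p₂) (hY : μ.map Y = _root_.betaMeasure p₃ p₁)
    (hindep : IndepFun X Y μ) :
    IndepFun (fun ω => 1 - X ω * Y ω) (fun ω => (1 - X ω) / (1 - X ω * Y ω)) μ :=
  stmt_0_general μ X Y hXm hYm p₁ p₂ p₃ hp₁ hp₂ hp₃ hX hY hindep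
end

section
/- Let F, G, H, K : (0,1) → ℝ be continuous functions satisfying F(x) + G(y/(1-x)) = H(y) + K(x/(1-y)) for all (x,y) in D₀ = {(x,y) ∈ (0,1)² : x + y ∈ (0,1)}. Then there exist real constants κ₁, κ₂, κ₃ and C₁, C₂, C₃, C₄ with C₁ + C₂ = C₃ + C₄ such that F(x) = (κ₁+κ₃)·log(1-x) + κ₂·log x + C₁, G(x) = κ₁·log(1-x) + κ₃·log x + C₂, H(x) = (κ₁+κ₂)·log(1-x) + κ₃·log x + C₃, and K(x) = κ₁·log(1-x) + κ₂·log x + C₄ for all x ∈ (0,1). -/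
/-!
After the substitution `x = s / (1 + s + t)`, `y = t / (1 + s + t)`, symmetrising in `s, t` shows
that `P s = (F - H) (s / (1 + s))` satisfies
`P a + P b = P (a (1 + b) / (1 + a)) + P (b (1 + a) / (1 + b))` for `a b < 1`. This transformation
preserves `a b` and its iterates converge to `(√(a b), √(a b))`, so `P ∘ exp` is a continuous
solution of Jensen's equation and `F - H`, `K - G` are logarithmic. What remains is a two-function
equation `F₁ x - F₁ y = K (x / (1 - y)) - K (y / (1 - x))`. Letting `x → 0` in it,
`c ↦ lim (K (c x) - K x)` is a continuous homomorphism `(ℝ>0, ·) → (ℝ, +)`, i.e. a multiple of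
`log`, and this fixes `F₁ - K`. The same limit argument at `1`, applied to the remaining
one-function equation, leaves a continuous `Δ` with `Δ (1 - r) = Δ r = Δ (r ^ 2)`; the orbits of
these two maps are dense, so `Δ` is constant.
-/

open Set Real Filter Topology

theorem eq_mul_log_of_map_mul {L : ℝ → ℝ} (hL : ContinuousOn L (Ioi 0))
    (hmul : ∀ c > 0, ∀ d > 0, L (c * d) = L c + L d) {c : ℝ} (hc : 0 < c) :
    L c = L (exp 1) * log c := by
  let g : ℝ →+ ℝ := AddMonoidHom.mk' (fun a => L (exp a)) fun a b => by
    simp only [exp_add]; exact hmul _ (exp_pos a) _ (exp_pos b)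
  have hg : Continuous g := hL.comp_continuous continuous_exp exp_pos
  simpa [g, exp_log hc, mul_comm] using map_real_smul g hg (log c) 1

theorem tendsto_const_mul_nhdsGT_zero {d : ℝ} (hd : 0 < d) :
    Tendsto (d * ·) (𝓝[>] 0) (𝓝[>] 0) :=
  tendsto_iff_comap.2 (comap_mulLeft_nhdsGT_zero hd).ge

theorem map_mul_of_tendsto_mul_sub {f L : ℝ → ℝ}
    (hf : ∀ c > 0, Tendsto (fun x => f (c * x) - f x) (𝓝[>] 0) (𝓝 (L c))) :
    ∀ c > 0, ∀ d > 0, L (c * d) = L c + L d := by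
  intro c hc d hd
  have := ((hf c hc).comp (tendsto_const_mul_nhdsGT_zero hd)).add (hf d hd)
  refine tendsto_nhds_unique (hf _ (mul_pos hc hd)) (this.congr fun x => ?_)
  simp only [Function.comp_apply, mul_assoc]
  ring

theorem one_div_one_add_mem_Ioo {c : ℝ} (hc : 0 < c) : 1 / (1 + c) ∈ Ioo (0:ℝ) 1 :=
  ⟨by positivity, by rw [div_lt_one (by linarith)]; linarith⟩

theorem div_one_add_mem_Ioo {c : ℝ} (hc : 0 < c) : c / (1 + c) ∈ Ioo (0:ℝ) 1 :=
  ⟨by positivity, by rw [div_lt_one (by linarith)]; linarith⟩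

theorem continuousOn_comp_one_div_one_add {φ : ℝ → ℝ} (hφ : ContinuousOn φ (Ioo 0 1)) :
    ContinuousOn (fun c => φ (1 / (1 + c))) (Ioi 0) :=
  hφ.comp (continuousOn_const.div (by fun_prop) fun c hc => by simp at hc ⊢; linarith)
    fun _ hc => one_div_one_add_mem_Ioo hc

theorem continuousOn_comp_div_one_add {φ : ℝ → ℝ} (hφ : ContinuousOn φ (Ioo 0 1)) :
    ContinuousOn (fun c => φ (c / (1 + c))) (Ioi 0) :=
  hφ.comp (continuousOn_id.div (by fun_prop) fun c hc => by simp at hc ⊢; linarith)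
    fun _ hc => div_one_add_mem_Ioo hc

theorem continuousOn_log_one_sub : ContinuousOn (fun x : ℝ => log (1 - x)) (Ioo 0 1) :=
  continuousOn_log.comp (by fun_prop) fun x hx => by simp; linarith [hx.2]

theorem exp_neg_mem_Ioo {s : ℝ} (hs : 0 < s) : exp (-s) ∈ Ioo (0:ℝ) 1 :=
  ⟨exp_pos _, exp_lt_one_iff.2 (neg_lt_zero.2 hs)⟩

theorem div_div_one_add_div (x y : ℝ) {d : ℝ} (hd : d ≠ 0) :
    x / d / (1 + y / d) = x / (d + y) := by
  rw [one_add_div hd, div_div_div_cancel_right₀ hd]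

theorem div_div_one_sub_div (x y : ℝ) {d : ℝ} (hd : d ≠ 0) :
    x / d / (1 - y / d) = x / (d - y) := by
  rw [one_sub_div hd, div_div_div_cancel_right₀ hd]

theorem log_one_sub_sub_log_one_sub {x y : ℝ} (hx : 0 < x) (hy : 0 < y) (hxy : x + y < 1) :
    log (1 - x) - log (1 - y) = log (1 - x / (1 - y)) - log (1 - y / (1 - x)) := by
  have hx₁ : 0 < 1 - x := by linarith
  have hy₁ : 0 < 1 - y := by linarith
  have e₁ : 1 - x / (1 - y) = (1 - x - y) / (1 - y) := by field_simp; ring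
  have e₂ : 1 - y / (1 - x) = (1 - x - y) / (1 - x) := by field_simp
  rw [e₁, e₂, log_div (by linarith) hy₁.ne', log_div (by linarith) hx₁.ne']
  ring

theorem tendsto_apply_div_one_sub_mul {K : ℝ → ℝ} {b : ℝ} (hK : ContinuousAt K b) (a : ℝ) :
    Tendsto (fun x => K (b / (1 - a * x))) (𝓝 0) (𝓝 (K b)) := by
  have : ContinuousAt (fun x : ℝ => b / (1 - a * x)) 0 :=
    continuousAt_const.div (by fun_prop) (by simp)
  exact hK.tendsto.comp (by simpa using this.tendsto)

theorem iterate_pos_and_abs_sub_sqrt_le {k : ℝ} (hk : k ∈ Ioo 0 1) {a : ℝ} (ha : 0 < a) (n : ℕ) :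
    0 < (fun u => (u + k) / (1 + u))^[n] a ∧
      |(fun u => (u + k) / (1 + u))^[n] a - √k| ≤ (1 - √k) ^ n * |a - √k| := by
  have hσ : √k < 1 := by rw [Real.sqrt_lt' one_pos]; simpa using hk.2
  induction n with
  | zero => simpa using ha
  | succ n ih =>
    obtain ⟨hpos, hle⟩ := ih
    rw [Function.iterate_succ_apply']
    set u := (fun u => (u + k) / (1 + u))^[n] a
    have hu : 0 < 1 + u := by linarith
    have hid : (u + k) / (1 + u) - √k = (u - √k) * (1 - √k) / (1 + u) := by
      field_simp; nlinarith [Real.mul_self_sqrt hk.1.le]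
    refine ⟨by have := hk.1; positivity, ?_⟩
    rw [hid, abs_div, abs_mul, abs_of_pos hu, abs_of_pos (by linarith : 0 < 1 - √k), pow_succ]
    calc |u - √k| * (1 - √k) / (1 + u) ≤ |u - √k| * (1 - √k) :=
          div_le_self (by positivity) (by linarith)
      _ ≤ (1 - √k) ^ n * |a - √k| * (1 - √k) := by gcongr
      _ = _ := by ring

theorem tendsto_iterate_add_div_one_add {k : ℝ} (hk : k ∈ Ioo 0 1) {a : ℝ} (ha : 0 < a) :
    Tendsto (fun n => (fun u => (u + k) / (1 + u))^[n] a) atTop (𝓝 √k) := by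
  have hσ : 0 < √k := Real.sqrt_pos.2 hk.1
  have hσ1 : √k < 1 := by rw [Real.sqrt_lt' one_pos]; simpa using hk.2
  have hgeom : Tendsto (fun n : ℕ => (1 - √k) ^ n * |a - √k|) atTop (𝓝 0) := by
    simpa using (tendsto_pow_atTop_nhds_zero_of_lt_one (by linarith) (by linarith)).mul_const
      |a - √k|
  rw [tendsto_iff_norm_sub_tendsto_zero]
  exact squeeze_zero (fun _ => norm_nonneg _)
    (fun n => (iterate_pos_and_abs_sub_sqrt_le hk ha n).2) hgeom

section JensenType

variable {P : ℝ → ℝ} (hP : ContinuousOn P (Ioi 0))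
  (h : ∀ a > 0, ∀ b > 0, a * b < 1 →
    P a + P b = P (a * (1 + b) / (1 + a)) + P (b * (1 + a) / (1 + b)))
include hP h

theorem add_apply_div_eq_two_mul_apply_sqrt {k : ℝ} (hk : k ∈ Ioo 0 1)
    {a : ℝ} (ha : 0 < a) : P a + P (k / a) = 2 * P √k := by
  set T : ℝ → ℝ := fun u => (u + k) / (1 + u)
  have hstep : ∀ u > 0, P (T u) + P (k / T u) = P u + P (k / u) := by
    intro u hu
    have hku : 0 < k / u := div_pos hk.1 hu
    have := h u hu (k / u) hku (by rw [mul_div_cancel₀ _ hu.ne']; exact hk.2)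
    have e₁ : u * (1 + k / u) / (1 + u) = T u := by simp only [T]; field_simp
    have e₂ : k / u * (1 + u) / (1 + k / u) = k / T u := by simp only [T]; field_simp
    rw [e₁, e₂] at this
    exact this.symm
  have hconst : ∀ n, P (T^[n] a) + P (k / T^[n] a) = P a + P (k / a) := by
    intro n
    induction n with
    | zero => rfl
    | succ n ih =>
      rw [Function.iterate_succ_apply', hstep _ (iterate_pos_and_abs_sub_sqrt_le hk ha n).1, ih]
  have hσ : 0 < √k := Real.sqrt_pos.2 hk.1
  have hkσ : k / √k = √k := by rw [div_eq_iff hσ.ne', Real.mul_self_sqrt hk.1.le]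
  have hcont : ContinuousAt (fun u => P u + P (k / u)) √k := by
    have hPσ : ContinuousAt P √k := hP.continuousAt (Ioi_mem_nhds hσ)
    refine hPσ.add (ContinuousAt.comp ?_ (continuousAt_const.div continuousAt_id hσ.ne'))
    simpa [hkσ] using hPσ
  have hlim := hcont.tendsto.comp (tendsto_iterate_add_div_one_add hk ha)
  rw [tendsto_nhds_unique (tendsto_const_nhds.congr fun n => (hconst n).symm) hlim]
  simp only [hkσ]
  ring

theorem add_apply_exp_sub {κ : ℝ} (hκ : κ < 0) (α : ℝ) :
    P (exp α) + P (exp (κ - α)) = 2 * P (exp (κ / 2)) := by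
  have := add_apply_div_eq_two_mul_apply_sqrt hP h ⟨exp_pos κ, exp_lt_one_iff.2 hκ⟩ (exp_pos α)
  rwa [← exp_sub, ← exp_half] at this

/-- Reduced to the case `α + β < 0` (`add_apply_exp_sub`) through an auxiliary point `γ` far to
the left. -/
theorem add_apply_exp_eq_two_mul_apply_exp_midpoint (α β : ℝ) :
    P (exp α) + P (exp β) = 2 * P (exp ((α + β) / 2)) := by
  obtain ⟨γ, hαγ, hβγ⟩ : ∃ γ, α + γ < 0 ∧ β + γ < 0 :=
    ⟨-(|α| + |β|) - 1, by linarith [le_abs_self α, abs_nonneg β],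
      by linarith [le_abs_self β, abs_nonneg α]⟩
  have e₁ := add_apply_exp_sub hP h (κ := α + γ) hαγ α
  have e₂ := add_apply_exp_sub hP h (κ := β + γ) hβγ β
  have e₃ := add_apply_exp_sub hP h (κ := (α + β) / 2 + γ) (by linarith) ((α + γ) / 2)
  have e₄ := add_apply_exp_sub hP h (κ := (α + β) / 2 + γ) (by linarith) ((α + β) / 2)
  ring_nf at e₁ e₂ e₃ e₄ ⊢
  linarith

theorem eq_mul_log_add_of_add_apply_eq (s : ℝ) (hs : 0 < s) :
    P s = (P (exp 1) - P 1) * log s + P 1 := by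
  have hmul : ∀ c > 0, ∀ d > 0, P (c * d) - P 1 = (P c - P 1) + (P d - P 1) := by
    intro c hc d hd
    have h₁ := add_apply_exp_eq_two_mul_apply_exp_midpoint hP h (log c + log d) 0
    have h₂ := add_apply_exp_eq_two_mul_apply_exp_midpoint hP h (log c) (log d)
    rw [add_zero, exp_zero, exp_add, exp_log hc, exp_log hd] at h₁
    rw [exp_log hc, exp_log hd] at h₂
    linarith
  have := eq_mul_log_of_map_mul (L := fun s => P s - P 1) (hP.sub continuousOn_const) hmul hs
  linarith

end JensenType

section TwoFunction

variable {F K : ℝ → ℝ}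
  (h : ∀ x ∈ Ioo (0:ℝ) 1, ∀ y ∈ Ioo (0:ℝ) 1, x + y < 1 →
    F x - F y = K (x / (1 - y)) - K (y / (1 - x)))
include h

theorem tendsto_apply_mul_sub_of_sub_eq (hK : ContinuousOn K (Ioo 0 1)) {b b' : ℝ}
    (hb : b ∈ Ioo (0:ℝ) 1) (hb' : b' ∈ Ioo (0:ℝ) 1) :
    Tendsto (fun x => K ((1 - b') / (1 - b) * x) - K x) (𝓝[>] 0)
      (𝓝 ((F b' - K b') - (F b - K b))) := by
  have hKat : ∀ u ∈ Ioo (0:ℝ) 1, ContinuousAt K u := fun u hu =>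
    hK.continuousAt (isOpen_Ioo.mem_nhds hu)
  have hrhs : Tendsto
      (fun x => F b' - F b + (K (b / (1 - (1 - b') * x)) - K (b' / (1 - (1 - b') * x))))
      (𝓝[>] 0) (𝓝 (F b' - F b + (K b - K b'))) :=
    (((tendsto_apply_div_one_sub_mul (hKat b hb) (1 - b')).sub
      (tendsto_apply_div_one_sub_mul (hKat b' hb') (1 - b'))).const_add _).mono_left
      nhdsWithin_le_nhds
  rw [show F b' - K b' - (F b - K b) = F b' - F b + (K b - K b') by ring]
  refine hrhs.congr' ?_
  have hε : 0 < min (1 - b) (1 - b') := lt_min (by linarith [hb.2]) (by linarith [hb'.2])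
  filter_upwards [Ioo_mem_nhdsGT hε] with x hx
  have hx₁ : x < 1 - b := hx.2.trans_le (min_le_left _ _)
  have hx₂ : x < 1 - b' := hx.2.trans_le (min_le_right _ _)
  have hb'₁ : 0 < 1 - b' := by linarith [hb'.2]
  have ht : (1 - b') * x ≤ x := by nlinarith [hx.1, hb'.1]
  have ht₀ : (1 - b') * x ∈ Ioo (0:ℝ) 1 := ⟨by nlinarith [hx.1], by linarith [hb.1]⟩
  have e := h _ ht₀ b hb (by linarith)
  have e' := h _ ht₀ b' hb' (by linarith)
  rw [mul_div_cancel_left₀ _ hb'₁.ne'] at e'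
  rw [mul_div_right_comm] at e
  linarith

theorem exists_eq_add_mul_log_one_sub_of_sub_eq (hF : ContinuousOn F (Ioo 0 1))
    (hK : ContinuousOn K (Ioo 0 1)) :
    ∃ κ C : ℝ, ∀ x ∈ Ioo (0:ℝ) 1, F x = K x + κ * log (1 - x) + C := by
  set φ := fun b => F b - K b
  set L := fun c => φ (1 / (1 + c)) - φ (c / (1 + c))
  have hL : ∀ c > 0, Tendsto (fun x => K (c * x) - K x) (𝓝[>] 0) (𝓝 (L c)) := by
    intro c hc
    have hratio : (1 - 1 / (1 + c)) / (1 - c / (1 + c)) = c := by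
      field_simp; ring
    have := tendsto_apply_mul_sub_of_sub_eq h hK (div_one_add_mem_Ioo hc)
      (one_div_one_add_mem_Ioo hc)
    rwa [hratio] at this
  have hφ : ContinuousOn φ (Ioo 0 1) := hF.sub hK
  have hlog : ∀ c > 0, L c = L (exp 1) * log c := fun c hc => eq_mul_log_of_map_mul (L := L)
    ((continuousOn_comp_one_div_one_add hφ).sub (continuousOn_comp_div_one_add hφ))
    (map_mul_of_tendsto_mul_sub hL) hc
  refine ⟨L (exp 1), φ (1 / 2) - L (exp 1) * log (1 / 2), fun x hx => ?_⟩
  have hx₁ : 0 < 1 - x := by linarith [hx.2]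
  have hc : 0 < (1 - 1 / 2) / (1 - x) := by positivity
  have := tendsto_nhds_unique (tendsto_apply_mul_sub_of_sub_eq h hK hx (by norm_num)) (hL _ hc)
  rw [hlog _ hc, log_div (by norm_num) hx₁.ne'] at this
  norm_num at this
  simp only [φ] at this ⊢
  linarith

theorem sub_mul_log_sub_eq {κ C : ℝ} (hFK : ∀ x ∈ Ioo (0:ℝ) 1, F x = K x + κ * log (1 - x) + C) :
    ∀ x ∈ Ioo (0:ℝ) 1, ∀ y ∈ Ioo (0:ℝ) 1, x + y < 1 →
      (K x - κ * log x) - (K y - κ * log y) =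
        (K (x / (1 - y)) - κ * log (x / (1 - y))) - (K (y / (1 - x)) - κ * log (y / (1 - x))) := by
  intro x hx y hy hxy
  have hx₁ : 0 < 1 - x := by linarith [hx.2]
  have hy₁ : 0 < 1 - y := by linarith [hy.2]
  rw [log_div hx.1.ne' hy₁.ne', log_div hy.1.ne' hx₁.ne']
  linear_combination h x hx y hy hxy - hFK x hx + hFK y hy

end TwoFunction

theorem exists_mem_Ico_of_tendsto_atTop {ℓ : ℕ → ℝ} {δ τ : ℝ} (hℓ : Tendsto ℓ atTop atTop)
    (hgap : ∀ n, ℓ (n + 1) < ℓ n + δ) (hτ : ℓ 0 < τ) : ∃ n, ℓ n ∈ Ico τ (τ + δ) := by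
  classical
  have hex : ∃ n, τ ≤ ℓ n := (hℓ.eventually_ge_atTop τ).exists
  refine ⟨Nat.find hex, Nat.find_spec hex, ?_⟩
  obtain ⟨k, hk⟩ : ∃ k, Nat.find hex = k + 1 :=
    Nat.exists_eq_add_one.2 (Nat.pos_of_ne_zero fun h0 => (Nat.find_spec hex).not_gt (h0 ▸ hτ))
  have hkτ : ℓ k < τ := not_le.1 (Nat.find_min hex (by omega))
  rw [hk]
  linarith [hgap k]

section SquareAndFlip

variable {D : ℝ → ℝ} (hsym : ∀ x ∈ Ioo (0:ℝ) 1, D (1 - x) = D x)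
  (hsq : ∀ x ∈ Ioo (0:ℝ) 1, D (x ^ 2) = D x)

include hsq in
theorem apply_exp_neg_div_two_pow {s : ℝ} (hs : 0 < s) (m : ℕ) :
    D (exp (-(s / 2 ^ m))) = D (exp (-s)) := by
  induction m with
  | zero => simp
  | succ m ih =>
    have hsq' : exp (-(s / 2 ^ (m + 1))) ^ 2 = exp (-(s / 2 ^ m)) := by
      rw [← exp_nat_mul, pow_succ]; congr 1; push_cast; field_simp
    rw [← ih, ← hsq', hsq _ (exp_neg_mem_Ioo (by positivity))]

include hsym hsq in
/-- `ℓ n = -log (1 - x ^ (2 ^ (-n)))`; the gap bound comes from `1 - r ^ 2 = (1 - r) (1 + r)`. -/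
theorem exists_seq_apply_exp_neg_eq {x : ℝ} (hx : x ∈ Ioo (0:ℝ) 1) :
    ∃ ℓ : ℕ → ℝ, Tendsto ℓ atTop atTop ∧ (∀ n, ℓ (n + 1) < ℓ n + 1) ∧
      ∀ n, 0 < ℓ n ∧ D (exp (-ℓ n)) = D x := by
  set s := -log x
  have hs : 0 < s := neg_pos.2 (log_neg hx.1 hx.2)
  set r : ℕ → ℝ := fun n => exp (-(s / 2 ^ n))
  have hr : ∀ n, r n ∈ Ioo (0:ℝ) 1 := fun n => exp_neg_mem_Ioo (by positivity)
  have hr₁ : ∀ n, 0 < 1 - r n := fun n => by linarith [(hr n).2]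
  have hrsq : ∀ n, r (n + 1) ^ 2 = r n := fun n => by
    simp only [r]; rw [← exp_nat_mul, pow_succ]; congr 1; push_cast; field_simp
  refine ⟨fun n => -log (1 - r n), ?_, fun n => ?_, fun n => ⟨?_, ?_⟩⟩
  · have hr_lim : Tendsto r atTop (𝓝 1) := by
      have : Tendsto (fun n : ℕ => -(s / 2 ^ n)) atTop (𝓝 0) := by
        simpa using ((tendsto_pow_atTop_atTop_of_one_lt one_lt_two).const_div_atTop s).neg
      have := (continuous_exp.tendsto 0).comp this
      rwa [exp_zero] at this
    have : Tendsto (fun n => 1 - r n) atTop (𝓝[>] 0) :=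
      tendsto_nhdsWithin_iff.2 ⟨by simpa using hr_lim.const_sub 1, .of_forall hr₁⟩
    exact tendsto_neg_atBot_atTop.comp (tendsto_log_nhdsGT_zero.comp this)
  · have hlog2 : log (1 + r (n + 1)) < 1 := by
      rw [log_lt_iff_lt_exp (by linarith [(hr (n + 1)).1])]
      linarith [(hr (n + 1)).2, exp_one_gt_d9]
    have hfac : 1 - r n = (1 - r (n + 1)) * (1 + r (n + 1)) := by rw [← hrsq]; ring
    show -log (1 - r (n + 1)) < -log (1 - r n) + 1
    rw [hfac, log_mul (hr₁ _).ne' (by linarith [(hr (n + 1)).1])]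
    linarith
  · exact neg_pos.2 (log_neg (hr₁ n) (by linarith [(hr n).1]))
  · rw [neg_neg, exp_log (hr₁ n), hsym _ (hr n), apply_exp_neg_div_two_pow hsq hs,
      neg_neg, exp_log hx.1]

include hsym hsq in
/-- Every `exp (-(ℓ n / 2 ^ m))` lies in the orbit of `x`, and for fixed `m` their logarithms are
less than `2 ^ (-m)` apart. -/
theorem apply_eq_of_apply_sq_of_apply_one_sub (hD : ContinuousOn D (Ioo 0 1)) {x y : ℝ}
    (hx : x ∈ Ioo (0:ℝ) 1) (hy : y ∈ Ioo (0:ℝ) 1) : D y = D x := by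
  obtain ⟨ℓ, hℓ, hgap, hℓD⟩ := exists_seq_apply_exp_neg_eq hsym hsq hx
  set τ := -log y
  have hτ : 0 < τ := neg_pos.2 (log_neg hy.1 hy.2)
  have hcont : ContinuousAt (fun s => D (exp (-s))) τ := by
    refine ContinuousAt.comp (f := fun s => exp (-s)) ?_ (by fun_prop)
    rw [neg_neg, exp_log hy.1]
    exact hD.continuousAt (isOpen_Ioo.mem_nhds hy)
  refine eq_of_forall_dist_le fun ε hε => ?_
  obtain ⟨δ, hδ, hδε⟩ := Metric.continuousAt_iff.1 hcont ε hε
  obtain ⟨m, hm⟩ := pow_unbounded_of_one_lt (max (1 / δ) (ℓ 0 / τ)) one_lt_two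
  have h2m : (0:ℝ) < 2 ^ m := by positivity
  obtain ⟨n, hn⟩ := exists_mem_Ico_of_tendsto_atTop (τ := 2 ^ m * τ) hℓ hgap
    (by have := (div_lt_iff₀ hτ).1 ((le_max_right _ _).trans_lt hm); linarith)
  have hdist : dist (ℓ n / 2 ^ m) τ < δ := by
    have hδm : 1 / 2 ^ m < δ := by
      rw [div_lt_iff₀ h2m, mul_comm, ← div_lt_iff₀ hδ]; exact (le_max_left _ _).trans_lt hm
    have h₁ : τ ≤ ℓ n / 2 ^ m := by rw [le_div_iff₀ h2m]; linarith [hn.1]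
    have h₂ : ℓ n / 2 ^ m < τ + 1 / 2 ^ m := by
      rw [div_lt_iff₀ h2m, add_mul, one_div_mul_cancel h2m.ne']; linarith [hn.2]
    rw [Real.dist_eq, abs_lt]
    constructor <;> linarith
  have := hδε hdist
  rw [apply_exp_neg_div_two_pow hsq (hℓD n).1, (hℓD n).2, neg_neg, exp_log hy.1, dist_comm]
    at this
  exact this.le

end SquareAndFlip

section OneFunction

variable {K : ℝ → ℝ}
  (h : ∀ x ∈ Ioo (0:ℝ) 1, ∀ y ∈ Ioo (0:ℝ) 1, x + y < 1 →
    K x - K y = K (x / (1 - y)) - K (y / (1 - x)))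
include h

theorem apply_sq_of_apply_one_sub (hsym : ∀ x ∈ Ioo (0:ℝ) 1, K (1 - x) = K x) {r : ℝ}
    (hr : r ∈ Ioo (0:ℝ) 1) : K (r ^ 2) = K r := by
  have hr₀ : r ≠ 0 := hr.1.ne'
  have hr₁ : 0 < 1 + r := by linarith [hr.1]
  have hmem : r / (1 + r) ∈ Ioo (0:ℝ) 1 := div_one_add_mem_Ioo hr.1
  have := h (1 - r) ⟨by linarith [hr.2], by linarith [hr.1]⟩ (r / (1 + r)) hmem (by
    have : r / (1 + r) < r := by rw [div_lt_iff₀ hr₁]; nlinarith [hr.1]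
    linarith)
  have e₁ : (1 - r) / (1 - r / (1 + r)) = 1 - r ^ 2 := by field_simp; ring
  have e₂ : r / (1 + r) / (1 - (1 - r)) = 1 - r / (1 + r) := by
    rw [sub_sub_cancel]; field_simp; ring
  rw [e₁, e₂, hsym _ hr, hsym _ hmem, hsym _ ⟨pow_pos hr.1 2, by nlinarith [hr.1, hr.2]⟩] at this
  linarith

theorem tendsto_apply_one_sub_mul_sub (hK : ContinuousOn K (Ioo 0 1)) {c : ℝ} (hc : 0 < c) :
    Tendsto (fun w => K (1 - c * w) - K (1 - w)) (𝓝[>] 0)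
      (𝓝 (K (1 / (1 + c)) - K (c / (1 + c)))) := by
  set X := fun w => (1 - c * w) / (1 + c - c * w)
  set Y := fun w => c * (1 - w) / (1 + c - c * w)
  have hX : Tendsto X (𝓝 0) (𝓝 (1 / (1 + c))) := by
    have : ContinuousAt X 0 := (by fun_prop : ContinuousAt (fun w => 1 - c * w) 0).div
      (by fun_prop) (by simp; linarith)
    simpa [X] using this.tendsto
  have hY : Tendsto Y (𝓝 0) (𝓝 (c / (1 + c))) := by
    have : ContinuousAt Y 0 := (by fun_prop : ContinuousAt (fun w => c * (1 - w)) 0).div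
      (by fun_prop) (by simp; linarith)
    simpa [Y] using this.tendsto
  have hKat : ∀ u ∈ Ioo (0:ℝ) 1, ContinuousAt K u := fun u hu =>
    hK.continuousAt (isOpen_Ioo.mem_nhds hu)
  refine ((((hKat _ (one_div_one_add_mem_Ioo hc)).tendsto.comp hX).sub
    ((hKat _ (div_one_add_mem_Ioo hc)).tendsto.comp hY)).mono_left nhdsWithin_le_nhds).congr' ?_
  filter_upwards [Ioo_mem_nhdsGT (show (0:ℝ) < min 1 (1 / c) by positivity)] with w hw
  have hw₁ : w < 1 := hw.2.trans_le (min_le_left _ _)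
  have hcw : c * w < 1 := by
    have := hw.2.trans_le (min_le_right _ _); rwa [lt_div_iff₀ hc, mul_comm] at this
  have hden : 0 < 1 + c - c * w := by linarith
  have hc₀ : c ≠ 0 := hc.ne'
  have hXmem : X w ∈ Ioo (0:ℝ) 1 :=
    ⟨div_pos (by linarith) hden, (div_lt_one hden).2 (by linarith)⟩
  have hYmem : Y w ∈ Ioo (0:ℝ) 1 :=
    ⟨div_pos (mul_pos hc (by linarith)) hden, (div_lt_one hden).2 (by linarith)⟩
  have hsum : X w + Y w < 1 := by
    rw [← add_div, div_lt_one hden]; nlinarith [hw.1]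
  have e₁ : X w / (1 - Y w) = 1 - c * w := by simp only [X, Y]; field_simp; ring
  have e₂ : Y w / (1 - X w) = 1 - w := by
    have : 1 - X w = c / (1 + c - c * w) := by simp only [X]; field_simp; ring
    rw [this]; simp only [Y]; field_simp
  show K (X w) - K (Y w) = _
  have := h _ hXmem _ hYmem hsum
  rwa [e₁, e₂] at this

theorem exists_eq_mul_log_one_sub_add_of_sub_eq (hK : ContinuousOn K (Ioo 0 1)) :
    ∃ κ C : ℝ, ∀ x ∈ Ioo (0:ℝ) 1, K x = κ * log (1 - x) + C := by
  set L := fun c => K (1 / (1 + c)) - K (c / (1 + c))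
  have hlog : ∀ c > 0, L c = L (exp 1) * log c := fun c hc => eq_mul_log_of_map_mul (L := L)
    ((continuousOn_comp_one_div_one_add hK).sub (continuousOn_comp_div_one_add hK))
    (map_mul_of_tendsto_mul_sub (f := fun w => K (1 - w))
      fun c hc => tendsto_apply_one_sub_mul_sub h hK hc) hc
  set κ := L (exp 1)
  set Δ := fun x => K x - κ * log (1 - x)
  have hsym : ∀ x ∈ Ioo (0:ℝ) 1, Δ (1 - x) = Δ x := by
    intro x hx
    have hx₁ : 0 < 1 - x := by linarith [hx.2]
    have hc : 0 < (1 - x) / x := div_pos hx₁ hx.1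
    have hx₀ : x ≠ 0 := hx.1.ne'
    have e : 1 + (1 - x) / x = 1 / x := by field_simp; ring
    have : K (1 / (1 + (1 - x) / x)) - K ((1 - x) / x / (1 + (1 - x) / x)) = _ := hlog _ hc
    rw [e, one_div_one_div, div_div_div_cancel_right₀ hx.1.ne', div_one,
      log_div hx₁.ne' hx.1.ne'] at this
    simp only [Δ, sub_sub_cancel]
    linarith
  have hΔ : ∀ x ∈ Ioo (0:ℝ) 1, ∀ y ∈ Ioo (0:ℝ) 1, x + y < 1 →
      Δ x - Δ y = Δ (x / (1 - y)) - Δ (y / (1 - x)) := by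
    intro x hx y hy hxy
    have := log_one_sub_sub_log_one_sub hx.1 hy.1 hxy
    simp only [Δ]
    linear_combination h x hx y hy hxy - κ * this
  have hΔc : ContinuousOn Δ (Ioo 0 1) := hK.sub (continuousOn_const.mul continuousOn_log_one_sub)
  refine ⟨κ, Δ (1 / 2), fun x hx => ?_⟩
  have := apply_eq_of_apply_sq_of_apply_one_sub hsym
    (fun r hr => apply_sq_of_apply_one_sub hΔ hsym hr)
    hΔc (show (1 / 2 : ℝ) ∈ Ioo 0 1 by norm_num) hx
  simp only [Δ] at this ⊢
  linarith

end OneFunction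

section FourFunction

variable {F G H K : ℝ → ℝ}
  (heq : ∀ x y : ℝ, x ∈ Ioo (0:ℝ) 1 → y ∈ Ioo (0:ℝ) 1 → x + y ∈ Ioo (0:ℝ) 1 →
    F x + G (y / (1 - x)) = H y + K (x / (1 - y)))
include heq

theorem add_apply_div_one_add_eq_add {s t : ℝ} (hs : 0 < s) (ht : 0 < t) :
    F (s / (1 + s + t)) + G (t / (1 + t)) = H (t / (1 + s + t)) + K (s / (1 + s)) := by
  have hd : 0 < 1 + s + t := by linarith
  have := heq (s / (1 + s + t)) (t / (1 + s + t))
    ⟨by positivity, by rw [div_lt_one hd]; linarith⟩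
    ⟨by positivity, by rw [div_lt_one hd]; linarith⟩
    ⟨by positivity, by rw [← add_div, div_lt_one hd]; linarith⟩
  rwa [div_div_one_sub_div _ _ hd.ne', div_div_one_sub_div _ _ hd.ne',
    show 1 + s + t - s = 1 + t by ring, show 1 + s + t - t = 1 + s by ring] at this

theorem sub_apply_add_sub_apply {s t : ℝ} (hs : 0 < s) (ht : 0 < t) :
    (F - H) (s / (1 + s + t)) + (F - H) (t / (1 + s + t)) =
      (K - G) (s / (1 + s)) + (K - G) (t / (1 + t)) := by
  have h₁ := add_apply_div_one_add_eq_add heq hs ht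
  have h₂ := add_apply_div_one_add_eq_add heq ht hs
  rw [add_right_comm 1 t s] at h₂
  simp only [Pi.sub_apply]
  linarith

theorem exists_sub_eq_mul_log (hF : ContinuousOn F (Ioo 0 1)) (hH : ContinuousOn H (Ioo 0 1)) :
    ∃ m c : ℝ, ∀ u ∈ Ioo (0:ℝ) 1,
      (F - H) u = m * log (u / (1 - u)) + c ∧ (K - G) u = m * log u + c := by
  set P := fun s => (F - H) (s / (1 + s))
  have hPQ : ∀ s > 0, ∀ t > 0, P (s / (1 + t)) + P (t / (1 + s)) =
      (K - G) (s / (1 + s)) + (K - G) (t / (1 + t)) := by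
    intro s hs t ht
    simp only [P, div_div_one_add_div _ _ (show 1 + t ≠ 0 by positivity),
      div_div_one_add_div _ _ (show 1 + s ≠ 0 by positivity), add_right_comm 1 t s]
    exact sub_apply_add_sub_apply heq hs ht
  have hdiag : ∀ s > 0, (K - G) (s / (1 + s)) = P (s / (1 + s)) := fun s hs => by
    linarith [hPQ s hs s hs]
  have hP : ∀ a > 0, ∀ b > 0, a * b < 1 →
      P a + P b = P (a * (1 + b) / (1 + a)) + P (b * (1 + a) / (1 + b)) := by
    intro a ha b hb hab
    have hd : 0 < 1 - a * b := by linarith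
    have hs : 0 < a * (1 + b) / (1 - a * b) := by positivity
    have ht : 0 < b * (1 + a) / (1 - a * b) := by positivity
    have := hPQ _ hs _ ht
    rw [hdiag _ hs, hdiag _ ht] at this
    simp only [div_div_one_add_div _ _ hd.ne', show 1 - a * b + b * (1 + a) = 1 + b by ring,
      show 1 - a * b + a * (1 + b) = 1 + a by ring,
      mul_div_cancel_right₀ _ (show 1 + b ≠ 0 by positivity),
      mul_div_cancel_right₀ _ (show 1 + a ≠ 0 by positivity)] at this
    exact this
  have hPc : ContinuousOn P (Ioi 0) := continuousOn_comp_div_one_add (hF.sub hH)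
  refine ⟨P (exp 1) - P 1, P 1, fun u hu => ?_⟩
  have hu₁ : 0 < 1 - u := by linarith [hu.2]
  have hs : 0 < u / (1 - u) := div_pos hu.1 hu₁
  have e : u / (1 - u) / (1 + u / (1 - u)) = u := by
    rw [div_div_one_add_div _ _ hu₁.ne', sub_add_cancel, div_one]
  have h₁ := eq_mul_log_add_of_add_apply_eq hPc hP _ hs
  have h₂ := eq_mul_log_add_of_add_apply_eq hPc hP _ hu.1
  simp only [P, e] at h₁
  refine ⟨h₁, ?_⟩
  rw [← e, hdiag _ hs, e]
  exact h₂

theorem add_mul_log_one_sub_sub_eq {m c : ℝ} (hFH : ∀ u ∈ Ioo (0:ℝ) 1,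
      (F - H) u = m * log (u / (1 - u)) + c ∧ (K - G) u = m * log u + c) :
    ∀ x ∈ Ioo (0:ℝ) 1, ∀ y ∈ Ioo (0:ℝ) 1, x + y < 1 →
      (F x + m * log (1 - x)) - (F y + m * log (1 - y)) = K (x / (1 - y)) - K (y / (1 - x)) := by
  intro x hx y hy hxy
  have hx₁ : 0 < 1 - x := by linarith [hx.2]
  have hy₁ : 0 < 1 - y := by linarith [hy.2]
  have hv : y / (1 - x) ∈ Ioo (0:ℝ) 1 := ⟨div_pos hy.1 hx₁, (div_lt_one hx₁).2 (by linarith)⟩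
  have h₁ := (hFH y hy).1
  have h₂ := (hFH _ hv).2
  rw [log_div hy.1.ne' hy₁.ne'] at h₁
  rw [log_div hy.1.ne' hx₁.ne'] at h₂
  simp only [Pi.sub_apply] at h₁ h₂
  linear_combination heq x y hx hy ⟨by linarith [hx.1, hy.1], hxy⟩ - h₁ + h₂

end FourFunction

theorem stmt_2_general (F G H K : ℝ → ℝ)
    (hF : ContinuousOn F (Set.Ioo 0 1))
    (hH : ContinuousOn H (Set.Ioo 0 1)) (hK : ContinuousOn K (Set.Ioo 0 1))
    (heq : ∀ x y : ℝ, x ∈ Set.Ioo (0:ℝ) 1 → y ∈ Set.Ioo (0:ℝ) 1 → x + y ∈ Set.Ioo (0:ℝ) 1 →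
      F x + G (y / (1 - x)) = H y + K (x / (1 - y))) :
    ∃ κ₁ κ₂ κ₃ C₁ C₂ C₃ C₄ : ℝ, C₁ + C₂ = C₃ + C₄ ∧
      ∀ x ∈ Set.Ioo (0:ℝ) 1,
        F x = (κ₁ + κ₃) * Real.log (1 - x) + κ₂ * Real.log x + C₁ ∧
        G x = κ₁ * Real.log (1 - x) + κ₃ * Real.log x + C₂ ∧
        H x = (κ₁ + κ₂) * Real.log (1 - x) + κ₃ * Real.log x + C₃ ∧
        K x = κ₁ * Real.log (1 - x) + κ₂ * Real.log x + C₄ := by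
  obtain ⟨m, c₀, hFH⟩ := exists_sub_eq_mul_log heq hF hH
  have h₂ := add_mul_log_one_sub_sub_eq heq hFH
  obtain ⟨κ₂, c₁, hF₁⟩ := exists_eq_add_mul_log_one_sub_of_sub_eq h₂
    (hF.add (continuousOn_const.mul continuousOn_log_one_sub)) hK
  obtain ⟨κ₁, c₄, hK₀⟩ := exists_eq_mul_log_one_sub_add_of_sub_eq (sub_mul_log_sub_eq h₂ hF₁)
    (hK.sub (continuousOn_const.mul (continuousOn_log.mono fun x hx => hx.1.ne')))
  refine ⟨κ₁, κ₂, κ₂ - m, c₁ + c₄, c₄ - c₀, c₁ + c₄ - c₀, c₄, by ring, fun x hx => ?_⟩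
  have hK' : K x = κ₁ * log (1 - x) + κ₂ * log x + c₄ := by linarith [hK₀ x hx]
  have hF' : F x = (κ₁ + (κ₂ - m)) * log (1 - x) + κ₂ * log x + (c₁ + c₄) := by
    linarith [hF₁ x hx]
  obtain ⟨hFHx, hKGx⟩ := hFH x hx
  rw [Pi.sub_apply, log_div hx.1.ne' (by linarith [hx.2])] at hFHx
  rw [Pi.sub_apply] at hKGx
  exact ⟨hF', by linarith, by linarith, hK'⟩

theorem stmt_2 (F G H K : ℝ → ℝ)
    (hF : ContinuousOn F (Set.Ioo 0 1)) (hG : ContinuousOn G (Set.Ioo 0 1))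
    (hH : ContinuousOn H (Set.Ioo 0 1)) (hK : ContinuousOn K (Set.Ioo 0 1))
    (heq : ∀ x y : ℝ, x ∈ Set.Ioo (0:ℝ) 1 → y ∈ Set.Ioo (0:ℝ) 1 → x + y ∈ Set.Ioo (0:ℝ) 1 →
      F x + G (y / (1 - x)) = H y + K (x / (1 - y))) :
    ∃ κ₁ κ₂ κ₃ C₁ C₂ C₃ C₄ : ℝ, C₁ + C₂ = C₃ + C₄ ∧
      ∀ x ∈ Set.Ioo (0:ℝ) 1,
        F x = (κ₁ + κ₃) * Real.log (1 - x) + κ₂ * Real.log x + C₁ ∧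
        G x = κ₁ * Real.log (1 - x) + κ₃ * Real.log x + C₂ ∧
        H x = (κ₁ + κ₂) * Real.log (1 - x) + κ₃ * Real.log x + C₃ ∧
        K x = κ₁ * Real.log (1 - x) + κ₂ * Real.log x + C₄ :=
  stmt_2_general F G H K hF hH hK heq
end

section
/- Define ψ : D₀' → (0,1)² by ψ(x,y) = (1 - x·y, (1-x)/(1-x·y)), where D₀' = (0,1)². Then ψ is a bijection from (0,1)² onto (0,1)², with inverse ψ⁻¹(u,v) = (1 - u·v, (1-u)/(1-u·v)), and the absolute value of the Jacobian determinant of ψ⁻¹ at (u,v) equals u/(1 - u·v). -/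
/-!
The map `ψ(x, y) = (1 - x y, (1 - x) / (1 - x y))` is an involution of the open unit square:
for `(u, v) = ψ(x, y)` one has `u v = 1 - x` and `1 - u = x y`, so `ψ(u, v) = (x, y)`.
Hence it is its own inverse and a bijection of the square. In its Jacobian determinant the two
terms with denominator `(1 - x y)²` cancel, leaving `-x / (1 - x y)`.
-/

open Set

theorem LinearMap.det_prod_eq {R : Type*} [CommRing R] (f : R × R →ₗ[R] R × R) :
    f.det = (f (1, 0)).1 * (f (0, 1)).2 - (f (0, 1)).1 * (f (1, 0)).2 := by
  rw [← LinearMap.det_toMatrix (Module.Basis.finTwoProd R), Matrix.det_fin_two]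
  simp [LinearMap.toMatrix_apply]

noncomputable def betaTransform (p : ℝ × ℝ) : ℝ × ℝ :=
  (1 - p.1 * p.2, (1 - p.1) / (1 - p.1 * p.2))

theorem betaTransform_betaTransform {p : ℝ × ℝ} (h₁ : p.1 ≠ 0) (h₂ : 1 - p.1 * p.2 ≠ 0) :
    betaTransform (betaTransform p) = p := by
  obtain ⟨x, y⟩ := p
  have hfst : 1 - (1 - x * y) * ((1 - x) / (1 - x * y)) = x := by field_simp; ring
  simp only [betaTransform, hfst, Prod.mk.injEq, true_and]
  field_simp
  ring

theorem betaTransform_mapsTo :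
    MapsTo betaTransform (Ioo (0 : ℝ) 1 ×ˢ Ioo (0 : ℝ) 1) (Ioo (0 : ℝ) 1 ×ˢ Ioo (0 : ℝ) 1) := by
  rintro ⟨x, y⟩ ⟨⟨hx₀, hx₁⟩, ⟨hy₀, hy₁⟩⟩
  dsimp only [betaTransform] at *
  have hw : 0 < 1 - x * y := by nlinarith
  refine ⟨⟨by nlinarith, by nlinarith⟩, div_pos (by linarith) hw, ?_⟩
  rw [div_lt_one hw]
  nlinarith

theorem invOn_betaTransform :
    InvOn betaTransform betaTransform (Ioo (0 : ℝ) 1 ×ˢ Ioo (0 : ℝ) 1)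
      (Ioo (0 : ℝ) 1 ×ˢ Ioo (0 : ℝ) 1) := by
  have hinv : ∀ p ∈ Ioo (0 : ℝ) 1 ×ˢ Ioo (0 : ℝ) 1, betaTransform (betaTransform p) = p := by
    rintro ⟨x, y⟩ ⟨⟨hx₀, hx₁⟩, ⟨hy₀, hy₁⟩⟩
    exact betaTransform_betaTransform hx₀.ne' (by nlinarith)
  exact ⟨hinv, hinv⟩

theorem det_fderiv_betaTransform {x y : ℝ} (h : 1 - x * y ≠ 0) :
    (fderiv ℝ betaTransform (x, y)).det = -(x / (1 - x * y)) := by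
  have hw : HasFDerivAt (fun p : ℝ × ℝ => 1 - p.1 * p.2) _ (x, y) :=
    (hasFDerivAt_const (1 : ℝ) (x, y)).sub (hasFDerivAt_fst.mul (hasFDerivAt_snd (𝕜 := ℝ)))
  have hnum : HasFDerivAt (fun p : ℝ × ℝ => 1 - p.1) _ (x, y) :=
    (hasFDerivAt_const (1 : ℝ) (x, y)).sub (hasFDerivAt_fst (𝕜 := ℝ))
  have hL : HasFDerivAt betaTransform _ (x, y) :=
    hw.prodMk (hnum.mul ((hasFDerivAt_inv h).comp (x, y) hw))
  rw [hL.fderiv, ContinuousLinearMap.det, LinearMap.det_prod_eq]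
  simp
  ring

theorem stmt_7 (ψ φ : ℝ × ℝ → ℝ × ℝ)
    (hψ : ψ = fun p => (1 - p.1 * p.2, (1 - p.1) / (1 - p.1 * p.2)))
    (hφ : φ = fun p => (1 - p.1 * p.2, (1 - p.1) / (1 - p.1 * p.2))) :
    Set.BijOn ψ (Set.Ioo (0:ℝ) 1 ×ˢ Set.Ioo (0:ℝ) 1) (Set.Ioo (0:ℝ) 1 ×ˢ Set.Ioo (0:ℝ) 1) ∧
    Set.InvOn φ ψ (Set.Ioo (0:ℝ) 1 ×ˢ Set.Ioo (0:ℝ) 1) (Set.Ioo (0:ℝ) 1 ×ˢ Set.Ioo (0:ℝ) 1) ∧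
    ∀ u v : ℝ, u ∈ Set.Ioo (0:ℝ) 1 → v ∈ Set.Ioo (0:ℝ) 1 →
      |(fderiv ℝ φ (u, v)).det| = u / (1 - u * v) := by
  obtain rfl : ψ = betaTransform := hψ
  obtain rfl : φ = betaTransform := hφ
  refine ⟨invOn_betaTransform.bijOn betaTransform_mapsTo betaTransform_mapsTo,
    invOn_betaTransform, fun u v hu hv => ?_⟩
  have hw : 0 < 1 - u * v := by nlinarith [hu.1, hu.2, hv.1, hv.2]
  rw [det_fderiv_betaTransform hw.ne', abs_neg, abs_of_pos (div_pos hu.1 hw)]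
end

section
/- For r×r real symmetric positive definite matrices, let Δ_k(x) denote the leading principal k×k minor of x. For every lower triangular invertible matrix t and every symmetric positive definite x, Δ_k(t · x · tᵀ) = Δ_k(t · tᵀ) · Δ_k(x) for each 1 ≤ k ≤ r. -/
/-!
Since `t` is lower triangular, the leading `k × k` block of `t * y` and of `y * tᵀ` only involves
the leading blocks of `t` and `y`. Hence the leading block of `t * x * tᵀ` is `tₖ * xₖ * tₖᵀ`, and
the identity follows from multiplicativity of the determinant.
-/

open Matrix

/-- The leading principal `k × k` minor of an `r × r` matrix (meaningful for `k ≤ r`). -/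
noncomputable def pminor (r k : ℕ) (x : Matrix (Fin r) (Fin r) ℝ) : ℝ :=
  (Matrix.of fun i j : Fin k =>
    if h : (i : ℕ) < r ∧ (j : ℕ) < r then x ⟨i, h.1⟩ ⟨j, h.2⟩ else 0).det

namespace Matrix

variable {R : Type*} [CommSemiring R] {k r : ℕ}

theorem IsLowerTriangular.submatrix_castLE_mul (hkr : k ≤ r) {t : Matrix (Fin r) (Fin r) R}
    (ht : t.IsLowerTriangular) (x : Matrix (Fin r) (Fin r) R) :
    (t * x).submatrix (Fin.castLE hkr) (Fin.castLE hkr) =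
      t.submatrix (Fin.castLE hkr) (Fin.castLE hkr) *
        x.submatrix (Fin.castLE hkr) (Fin.castLE hkr) := by
  ext i j
  refine (Fintype.sum_of_injective _ (Fin.castLE_injective hkr) _ _ ?_ fun _ ↦ rfl).symm
  intro a ha
  have hia : Fin.castLE hkr i < a := by
    by_contra! h
    exact ha ⟨⟨a, lt_of_le_of_lt h i.2⟩, rfl⟩
  exact mul_eq_zero_of_left (ht hia) _

theorem IsLowerTriangular.submatrix_castLE_mul_transpose (hkr : k ≤ r)
    {t : Matrix (Fin r) (Fin r) R} (ht : t.IsLowerTriangular) (x : Matrix (Fin r) (Fin r) R) :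
    (x * tᵀ).submatrix (Fin.castLE hkr) (Fin.castLE hkr) =
      x.submatrix (Fin.castLE hkr) (Fin.castLE hkr) *
        (t.submatrix (Fin.castLE hkr) (Fin.castLE hkr))ᵀ := by
  rw [← transpose_transpose (x * tᵀ), transpose_mul, transpose_transpose, ← transpose_submatrix,
    ht.submatrix_castLE_mul, transpose_mul, transpose_submatrix, transpose_transpose]

end Matrix

theorem pminor_eq_det_submatrix {r k : ℕ} (hkr : k ≤ r) (x : Matrix (Fin r) (Fin r) ℝ) :
    pminor r k x = (x.submatrix (Fin.castLE hkr) (Fin.castLE hkr)).det := by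
  unfold pminor
  congr 1
  ext i j
  exact dif_pos ⟨i.2.trans_le hkr, j.2.trans_le hkr⟩

theorem stmt_11_general (r k : ℕ) (hkr : k ≤ r)
    (t x : Matrix (Fin r) (Fin r) ℝ)
    (ht : ∀ i j : Fin r, i < j → t i j = 0) :
    pminor r k (t * x * tᵀ) = pminor r k (t * tᵀ) * pminor r k x := by
  have ht' : t.IsLowerTriangular := fun i j hij ↦ ht i j hij
  simp only [pminor_eq_det_submatrix hkr, ht'.submatrix_castLE_mul_transpose,
    ht'.submatrix_castLE_mul, det_mul, det_transpose]
  ring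

theorem stmt_11 (r k : ℕ) (hk1 : 1 ≤ k) (hkr : k ≤ r)
    (t x : Matrix (Fin r) (Fin r) ℝ)
    (ht : ∀ i j : Fin r, i < j → t i j = 0) (htu : IsUnit t.det)
    (hx : x.PosDef) :
    pminor r k (t * x * tᵀ) = pminor r k (t * tᵀ) * pminor r k x :=
  stmt_11_general r k hkr t x ht
end

section
/- For any r×r real symmetric positive definite matrices x and y with x·y·x symmetric positive definite, det(x·y·x) = (det x)² · det y; consequently, for the quadratic representation P(y)x = y·x·y on symmetric matrices, Det(P(y)) (the determinant of P(y) as a linear endomorphism of the space of r×r symmetric matrices) equals (det y)^{r+1}. -/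
/-!
Congruence `a ↦ star b * a * b` of symmetric matrices is anti-multiplicative in `b`, so its
determinant is unchanged under conjugating `b` by an orthogonal matrix; by the spectral theorem it
therefore suffices to treat a diagonal `y = diagonal d`. In the coordinates given by the entries on
and above the diagonal, congruence by `diagonal d` is diagonal with entries `d i * d j` (`i ≤ j`),
and each `d i` occurs in exactly `r + 1` of these products.
-/

open Matrix

/-- The quadratic representation `P(y) : x ↦ y * x * y` as a linear endomorphism of the space of
real symmetric (self-adjoint) `r × r` matrices. -/
noncomputable def quadRep (r : ℕ) (y : Matrix (Fin r) (Fin r) ℝ) (hy : star y = y) :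
    Module.End ℝ (selfAdjoint.submodule ℝ (Matrix (Fin r) (Fin r) ℝ)) where
  toFun a := ⟨y * a.1 * y, by
    have ha : star a.1 = a.1 := a.2
    show star (y * a.1 * y) = y * a.1 * y
    rw [StarMul.star_mul, StarMul.star_mul, ha, hy, mul_assoc]⟩
  map_add' a b := by ext : 1; simp [Matrix.mul_add, Matrix.add_mul]
  map_smul' c a := by ext : 1; simp [Matrix.mul_smul, Matrix.smul_mul, mul_assoc]

open Finset

section CongrSelfAdjoint

variable (R : Type*) {A : Type*} [CommRing R] [StarRing R] [TrivialStar R] [Ring A] [StarRing A]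
  [Algebra R A] [StarModule R A]

def selfAdjointCongr (b : A) : Module.End R (selfAdjoint.submodule R A) where
  toFun a := ⟨star b * a * b, IsSelfAdjoint.conjugate' a.2 b⟩
  map_add' a c := Subtype.ext <| by simp [mul_add, add_mul]
  map_smul' t a := Subtype.ext <| by simp

@[simp]
lemma selfAdjointCongr_apply_coe (b : A) (a : selfAdjoint.submodule R A) :
    (selfAdjointCongr R b a : A) = star b * a * b :=
  rfl

lemma selfAdjointCongr_mul (b c : A) :
    selfAdjointCongr R (b * c) = selfAdjointCongr R c * selfAdjointCongr R b :=
  LinearMap.ext fun a => Subtype.ext <| by simp [mul_assoc]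

lemma selfAdjointCongr_one : selfAdjointCongr R (1 : A) = 1 :=
  LinearMap.ext fun a => Subtype.ext <| by simp

lemma det_selfAdjointCongr_unitary_conj {u : A} (hu : u ∈ unitary A) (b : A) :
    LinearMap.det (selfAdjointCongr R (u * b * star u)) = LinearMap.det (selfAdjointCongr R b) := by
  have hdet_u :
      LinearMap.det (selfAdjointCongr R u) * LinearMap.det (selfAdjointCongr R (star u)) = 1 := by
    rw [← map_mul, ← selfAdjointCongr_mul, Unitary.star_mul_self_of_mem hu, selfAdjointCongr_one,
      map_one]
  simp only [selfAdjointCongr_mul, map_mul]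
  linear_combination (LinearMap.det (selfAdjointCongr R b)) * hdet_u

end CongrSelfAdjoint

section SymmetricMatrices

variable {ι : Type*} [Fintype ι] [LinearOrder ι]

lemma card_filter_le_add_card_filter_ge (i : ι) :
    #{j | i ≤ j} + #{j | j ≤ i} = Fintype.card ι + 1 := by
  classical
  have hunion : filter (i ≤ ·) univ ∪ filter (· ≤ i) univ = univ := by
    ext j; simp [le_total]
  have hinter : filter (i ≤ ·) univ ∩ filter (· ≤ i) univ = {i} := by
    ext j; simp [le_antisymm_iff, and_comm]
  rw [← card_union_add_card_inter, hunion, hinter, card_univ, card_singleton]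

lemma prod_le_pairs_mul_eq_pow {M : Type*} [CommMonoid M] (d : ι → M) :
    ∏ p : {p : ι × ι // p.1 ≤ p.2}, d p.1.1 * d p.1.2 = (∏ i, d i) ^ (Fintype.card ι + 1) := by
  classical
  rw [← prod_subtype {p : ι × ι | p.1 ≤ p.2} (by simp) (fun p => d p.1 * d p.2), prod_mul_distrib,
    prod_filter, prod_filter, Fintype.prod_prod_type, Fintype.prod_prod_type_right]
  simp only [prod_ite, prod_const_one, mul_one, prod_const]
  simp_rw [← prod_pow, ← prod_mul_distrib, ← pow_add, card_filter_le_add_card_filter_ge]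

variable {R : Type*} [CommRing R] [StarRing R] [TrivialStar R]

def selfAdjointMatrixEquivUpper :
    selfAdjoint.submodule R (Matrix ι ι R) ≃ₗ[R] ({p : ι × ι // p.1 ≤ p.2} → R) where
  toFun a p := (a : Matrix ι ι R) p.1.1 p.1.2
  map_add' _ _ := rfl
  map_smul' _ _ := rfl
  invFun f := ⟨of fun i j => f ⟨(min i j, max i j), min_le_max⟩, by
    ext i j; simp [min_comm, max_comm]⟩
  left_inv a := by
    have ha : ∀ i j, (a : Matrix ι ι R) j i = (a : Matrix ι ι R) i j := fun i j => by
      simpa using congrFun (congrFun (a.2 : star (a : Matrix ι ι R) = a) i) j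
    ext i j
    rcases le_total i j with h | h <;> simp [h, ha]
  right_inv f := by
    ext ⟨⟨i, j⟩, h⟩
    simp [h]

lemma det_selfAdjointCongr_diagonal [DecidableEq ι] (d : ι → R) :
    LinearMap.det (selfAdjointCongr R (diagonal d)) = (∏ i, d i) ^ (Fintype.card ι + 1) := by
  let e := selfAdjointMatrixEquivUpper (ι := ι) (R := R)
  have hconj : (e : _ →ₗ[R] _) ∘ₗ selfAdjointCongr R (diagonal d) ∘ₗ e.symm =
      toLin' (diagonal fun p : {p : ι × ι // p.1 ≤ p.2} => d p.1.1 * d p.1.2) := by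
    refine LinearMap.ext fun f => funext fun p => ?_
    obtain ⟨⟨i, j⟩, hij⟩ := p
    rw [toLin'_apply, mulVec_diagonal]
    change (star (diagonal d) * of (fun i j => f ⟨(min i j, max i j), min_le_max⟩) *
      diagonal d) i j = d i * d j * f ⟨(i, j), hij⟩
    simp [star_eq_conjTranspose, min_eq_left (α := ι) hij, max_eq_right (α := ι) hij]
    ring
  rw [← LinearMap.det_conj _ e, hconj, LinearMap.det_toLin', det_diagonal, prod_le_pairs_mul_eq_pow]

end SymmetricMatrices

lemma det_selfAdjointCongr_of_isHermitian {ι : Type*} [Fintype ι] [LinearOrder ι]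
    {A : Matrix ι ι ℝ} (hA : A.IsHermitian) :
    LinearMap.det (selfAdjointCongr ℝ A) = A.det ^ (Fintype.card ι + 1) := by
  nth_rewrite 1 [hA.spectral_theorem]
  rw [Unitary.conjStarAlgAut_apply, det_selfAdjointCongr_unitary_conj ℝ (SetLike.coe_mem _),
    det_selfAdjointCongr_diagonal, hA.det_eq_prod_eigenvalues, RCLike.ofReal_real_eq_id]
  rfl

lemma quadRep_eq_selfAdjointCongr (r : ℕ) (y : Matrix (Fin r) (Fin r) ℝ) (hy : star y = y) :
    quadRep r y hy = selfAdjointCongr ℝ y :=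
  LinearMap.ext fun a => Subtype.ext <| by rw [selfAdjointCongr_apply_coe, hy]; rfl

theorem stmt_16_general (r : ℕ) (x y : Matrix (Fin r) (Fin r) ℝ) :
    (x * y * x).det = x.det ^ 2 * y.det ∧
    ∀ hy' : star y = y, LinearMap.det (quadRep r y hy') = y.det ^ (r + 1) := by
  refine ⟨by rw [det_mul, det_mul]; ring, fun hy' => ?_⟩
  rw [quadRep_eq_selfAdjointCongr, det_selfAdjointCongr_of_isHermitian hy', Fintype.card_fin]

theorem stmt_16 (r : ℕ) (x y : Matrix (Fin r) (Fin r) ℝ)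
    (hx : x.PosDef) (hy : y.PosDef) (hxyx : (x * y * x).PosDef) :
    (x * y * x).det = x.det ^ 2 * y.det ∧
    ∀ hy' : star y = y, LinearMap.det (quadRep r y hy') = y.det ^ (r + 1) :=
  stmt_16_general r x y
end
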